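/- arXiv:2501.04162 — 2 statements merged into one kernel-verified Lean document; each statement's English description precedes it below -/
import Mathlib

section
/- Let $p \ge 5$ be a prime and $r \ge 1$ an integer. Let $\Delta$ be a cyclic group of order $p^r$ with generator $\delta$, let $\Lambda = \mathbb{Z}_p[\Delta]$ be the group algebra, let $\iota$ be the ring automorphism of $\Lambda$ induced by $g \mapsto g^{-1}$ on $\Delta$, and let $\Lambda^+$ be the subring of $\Lambda$ fixed by $\iota$. Then $\Lambda^+$ is equal to the $\mathbb{Z}_p$-subalgebra of $\Lambda$ generated by the single element $[\delta] + [\delta^{-1}]$. -/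
/-!
Write `T g = [g] + [g⁻¹]`. The elements `T (δ ^ n)` satisfy the Chebyshev recurrence
`T (δ ^ (n + 2)) = T δ * T (δ ^ (n + 1)) - T (δ ^ n)`, so they all lie in the subalgebra
generated by `T δ`; since `δ` generates `Δ` and `T g⁻¹ = T g`, every `T g` lies there too.
For any `x`, the element `x + ι x` is a linear combination of the `T g`; if `ι x = x` this is
`2 x`, and `2` is a unit in `ℤ_p` for odd `p`.
-/

namespace MonoidAlgebra

variable {R : Type*} [CommRing R] {G : Type*} [CommGroup G]

lemma domCongr_inv_single (g : G) (a : R) :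
    domCongr R R (MulEquiv.inv G) (single g a) = single g⁻¹ a := by
  simp [domCongr_single]

lemma add_domCongr_inv_mem {S : Subalgebra R (MonoidAlgebra R G)}
    (hS : ∀ g : G, of R G g + of R G g⁻¹ ∈ S) (x : MonoidAlgebra R G) :
    x + domCongr R R (MulEquiv.inv G) x ∈ S := by
  induction x using induction_linear with
  | zero => simp
  | add x y hx hy =>
    rw [map_add, add_add_add_comm]
    exact S.add_mem hx hy
  | single g a =>
    have hsingle : single g a + single g⁻¹ a = a • (of R G g + of R G g⁻¹) := by
      simp [of_apply, smul_add]
    rw [domCongr_inv_single, hsingle]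
    exact S.smul_mem (hS g) a

lemma of_pow_add_of_pow_inv_mem_adjoin (δ : G) (n : ℕ) :
    of R G (δ ^ n) + of R G (δ ^ n)⁻¹ ∈ Algebra.adjoin R {of R G δ + of R G δ⁻¹} := by
  set A := Algebra.adjoin R {of R G δ + of R G δ⁻¹}
  have hgen : of R G δ + of R G δ⁻¹ ∈ A := Algebra.subset_adjoin rfl
  induction n using Nat.twoStepInduction with
  | zero =>
    rw [pow_zero, inv_one, map_one]
    exact A.add_mem A.one_mem A.one_mem
  | one => rwa [pow_one]
  | more n hn hn1 =>
    have hrec : of R G (δ ^ (n + 2)) + of R G (δ ^ (n + 2))⁻¹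
        = (of R G δ + of R G δ⁻¹) * (of R G (δ ^ (n + 1)) + of R G (δ ^ (n + 1))⁻¹)
          - (of R G (δ ^ n) + of R G (δ ^ n)⁻¹) := by
      simp only [mul_add, add_mul, ← map_mul]
      rw [show δ * δ ^ (n + 1) = δ ^ (n + 2) by group,
        show δ * (δ ^ (n + 1))⁻¹ = (δ ^ n)⁻¹ by group,
        show δ⁻¹ * δ ^ (n + 1) = δ ^ n by group,
        show δ⁻¹ * (δ ^ (n + 1))⁻¹ = (δ ^ (n + 2))⁻¹ by group]
      abel
    rw [hrec]
    exact A.sub_mem (A.mul_mem hgen hn1) hn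

lemma of_zpow_add_of_zpow_inv_mem_adjoin (δ : G) (n : ℤ) :
    of R G (δ ^ n) + of R G (δ ^ n)⁻¹ ∈ Algebra.adjoin R {of R G δ + of R G δ⁻¹} := by
  obtain ⟨m, rfl | rfl⟩ := n.eq_nat_or_neg
  · rw [zpow_natCast]
    exact of_pow_add_of_pow_inv_mem_adjoin δ m
  · rw [zpow_neg, inv_inv, zpow_natCast, add_comm (of R G (δ ^ m)⁻¹)]
    exact of_pow_add_of_pow_inv_mem_adjoin δ m

theorem equalizer_domCongr_inv_eq_adjoin (h2 : IsUnit (2 : R)) (δ : G)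
    (hδ : ∀ g : G, g ∈ Subgroup.zpowers δ) :
    AlgHom.equalizer (domCongr R R (MulEquiv.inv G)).toAlgHom (AlgHom.id R (MonoidAlgebra R G))
      = Algebra.adjoin R {of R G δ + of R G δ⁻¹} := by
  set A := Algebra.adjoin R {of R G δ + of R G δ⁻¹}
  apply le_antisymm
  · intro x (hx : domCongr R R (MulEquiv.inv G) x = x)
    have hA : ∀ g : G, of R G g + of R G g⁻¹ ∈ A := fun g => by
      obtain ⟨n, rfl⟩ := Subgroup.mem_zpowers_iff.mp (hδ g)
      exact of_zpow_add_of_zpow_inv_mem_adjoin δ n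
    have h2x : (2 : R) • x ∈ A := by
      simpa [hx, two_smul] using add_domCongr_inv_mem hA x
    simpa [smul_smul] using A.smul_mem h2x (h2.unit⁻¹ : Rˣ)
  · refine Algebra.adjoin_le (Set.singleton_subset_iff.mpr ?_)
    show domCongr R R (MulEquiv.inv G) _ = _
    simp [of_apply, add_comm]

end MonoidAlgebra

lemma PadicInt.isUnit_two {p : ℕ} [hp : Fact p.Prime] (hp2 : p ≠ 2) : IsUnit (2 : ℤ_[p]) := by
  rw [PadicInt.isUnit_iff, ← Nat.cast_ofNat, PadicInt.norm_natCast_eq_one_iff]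
  exact (Nat.coprime_primes hp.out Nat.prime_two).mpr hp2

theorem stmt_1_general (p : ℕ) [Fact p.Prime] (hp5 : 5 ≤ p)
    (Δ : Type) [CommGroup Δ]
    (δ : Δ) (hδ : ∀ x : Δ, x ∈ Subgroup.zpowers δ) :
    AlgHom.equalizer
        (MonoidAlgebra.domCongr ℤ_[p] ℤ_[p] (MulEquiv.inv Δ)).toAlgHom
        (AlgHom.id ℤ_[p] (MonoidAlgebra ℤ_[p] Δ))
      = Algebra.adjoin ℤ_[p]
          {MonoidAlgebra.of ℤ_[p] Δ δ + MonoidAlgebra.of ℤ_[p] Δ δ⁻¹} :=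
  MonoidAlgebra.equalizer_domCongr_inv_eq_adjoin (PadicInt.isUnit_two (by omega)) δ hδ

/-- Let `p ≥ 5` be prime, `r ≥ 1`, `Δ` a cyclic group of order `p^r` with generator `δ`,
`Λ = ℤ_p[Δ]` the group algebra, `ι` the ring automorphism of `Λ` induced by `g ↦ g⁻¹`,
and `Λ⁺` the fixed subring of `ι`.  Then `Λ⁺` equals the `ℤ_p`-subalgebra of `Λ`
generated by `[δ] + [δ⁻¹]`. -/
theorem stmt_1 (p : ℕ) [Fact p.Prime] (hp5 : 5 ≤ p) (r : ℕ) (hr : 1 ≤ r)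
    (Δ : Type) [CommGroup Δ] [Fintype Δ] (hcard : Fintype.card Δ = p ^ r)
    (δ : Δ) (hδ : ∀ x : Δ, x ∈ Subgroup.zpowers δ) :
    AlgHom.equalizer
        (MonoidAlgebra.domCongr ℤ_[p] ℤ_[p] (MulEquiv.inv Δ)).toAlgHom
        (AlgHom.id ℤ_[p] (MonoidAlgebra ℤ_[p] Δ))
      = Algebra.adjoin ℤ_[p]
          {MonoidAlgebra.of ℤ_[p] Δ δ + MonoidAlgebra.of ℤ_[p] Δ δ⁻¹} :=
  stmt_1_general p hp5 Δ δ hδ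
end

section
/- Let $p$ be a prime and let $\varphi : \mathbb{Z}_p\llbracket X \rrbracket \to \mathbb{Z}_p\llbracket T \rrbracket$ be the continuous $\mathbb{Z}_p$-algebra homomorphism determined by substituting $X \mapsto T^2(1+T)^{-1}$. Then $\varphi$ is injective, and for every nonzero $f \in \mathbb{Z}_p\llbracket X \rrbracket$ the induced ring homomorphism $\mathbb{Z}_p\llbracket X \rrbracket/(f) \to \mathbb{Z}_p\llbracket T \rrbracket/(\varphi(f))$ is injective; equivalently, $\varphi^{-1}\big(\varphi(f)\,\mathbb{Z}_p\llbracket T \rrbracket\big) = f\,\mathbb{Z}_p\llbracket X \rrbracket$. -/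
/-!
The congruences defining `φ` give `g := φ X = X² u` with `u = (1 + X)⁻¹` a unit. Then `R⟦X⟧` is free over `φ(R⟦X⟧)` with basis `1, X`:
every `q` splits as `φ a + φ b · X`, found by repeatedly peeling off `c + d X` and dividing the rest
by `g`, and the splitting is unique because `φ a + φ b · X ≡ a₀ + b₀ X mod X²` lets us divide
both `a` and `b` by `X` indefinitely. Injectivity of `φ` is the case `b = 0`, and if
`φ h = φ f · (φ a + φ b · X)` then uniqueness gives `h = f a`.
-/

open PowerSeries Finset

namespace PowerSeries

variable {R : Type*} [CommRing R]

theorem eq_zero_of_forall_X_pow_dvd {f : R⟦X⟧} (h : ∀ n, (X : R⟦X⟧) ^ n ∣ f) : f = 0 := by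
  ext n
  simpa using X_pow_dvd_iff.mp (h (n + 1)) n n.lt_succ_self

theorem X_pow_dvd_sub_trunc (f : R⟦X⟧) (n : ℕ) : (X : R⟦X⟧) ^ n ∣ f - trunc n f :=
  X_pow_dvd_iff.mpr fun m hm => by rw [map_sub, coeff_coe_trunc_of_lt hm, sub_self]

theorem exists_eq_C_add_C_mul_X_add_X_pow_two_mul (s : R⟦X⟧) :
    ∃ c d : R, ∃ t : R⟦X⟧, s = C c + C d * X + X ^ 2 * t := by
  let s' : R⟦X⟧ := mk fun n => coeff (n + 1) s
  refine ⟨constantCoeff s, constantCoeff s', mk fun n => coeff (n + 1) s', ?_⟩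
  linear_combination eq_X_mul_shift_add_const s + X * eq_X_mul_shift_add_const s'

variable {φ : R⟦X⟧ →+* R⟦X⟧}

theorem exists_eq_C_add_C_mul_X_add_map_X_mul {u : R⟦X⟧} (hX : φ X = X ^ 2 * u) (hu : IsUnit u)
    (s : R⟦X⟧) : ∃ c d : R, ∃ t : R⟦X⟧, s = C c + C d * X + φ X * t := by
  obtain ⟨c, d, t, rfl⟩ := exists_eq_C_add_C_mul_X_add_X_pow_two_mul s
  refine ⟨c, d, ↑hu.unit⁻¹ * t, ?_⟩
  rw [hX, mul_assoc, ← mul_assoc u, hu.mul_val_inv, one_mul]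

variable (hC : ∀ a : R, φ (C a) = C a)
include hC

theorem map_sub_sum_range_dvd (f : R⟦X⟧) (n : ℕ) :
    φ X ^ n ∣ φ f - ∑ i ∈ range n, C (coeff i f) * φ X ^ i := by
  obtain ⟨r, hr⟩ := X_pow_dvd_sub_trunc f n
  have hφ_trunc : φ (trunc n f) = (trunc n f).eval₂ C (φ X) := by
    rw [← Polynomial.eval₂_C_X_eq_coe, Polynomial.hom_eval₂, show φ.comp C = C from RingHom.ext hC]
  refine ⟨φ r, ?_⟩
  rw [← eval₂_trunc_eq_sum_range, ← hφ_trunc, ← map_sub, hr, map_mul, map_pow]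

theorem X_pow_two_dvd_map_sub_C (hX : (X : R⟦X⟧) ^ 2 ∣ φ X) (f : R⟦X⟧) :
    (X : R⟦X⟧) ^ 2 ∣ φ f - C (constantCoeff f) :=
  hX.trans (by simpa using map_sub_sum_range_dvd hC f 1)

theorem X_dvd_of_map_add_map_mul_X_eq_zero (hX : (X : R⟦X⟧) ^ 2 ∣ φ X) {a b : R⟦X⟧}
    (h : φ a + φ b * X = 0) : X ∣ a ∧ X ∣ b := by
  have hdvd : (X : R⟦X⟧) ^ 2 ∣ C (constantCoeff a) + C (constantCoeff b) * X := by
    have := dvd_add (X_pow_two_dvd_map_sub_C hC hX a)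
      ((X_pow_two_dvd_map_sub_C hC hX b).mul_right X)
    rw [← dvd_neg]
    convert this using 1
    linear_combination -h
  have hcoeff := X_pow_dvd_iff.mp hdvd
  refine ⟨X_dvd_iff.mpr ?_, X_dvd_iff.mpr ?_⟩
  · simpa using hcoeff 0 (by norm_num)
  · simpa [coeff_C] using hcoeff 1 (by norm_num)

variable {u : R⟦X⟧} (hX : φ X = X ^ 2 * u) (hu : IsUnit u)
include hX hu

theorem eq_zero_of_map_add_map_mul_X_eq_zero {a b : R⟦X⟧} (h : φ a + φ b * X = 0) :
    a = 0 ∧ b = 0 := by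
  have hX2 : (X : R⟦X⟧) ^ 2 ∣ φ X := ⟨u, hX⟩
  suffices ∀ n a b, φ a + φ b * X = 0 → (X : R⟦X⟧) ^ n ∣ a ∧ (X : R⟦X⟧) ^ n ∣ b from
    ⟨eq_zero_of_forall_X_pow_dvd fun n => (this n a b h).1,
      eq_zero_of_forall_X_pow_dvd fun n => (this n a b h).2⟩
  intro n
  induction n with
  | zero => simp
  | succ n ih =>
    intro a b h
    obtain ⟨⟨a', rfl⟩, ⟨b', rfl⟩⟩ := X_dvd_of_map_add_map_mul_X_eq_zero hC hX2 h
    have h' : φ a' + φ b' * X = 0 := by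
      refine hu.mul_right_eq_zero.mp (X_pow_mul_cancel (k := 2) ?_)
      rw [mul_zero, ← h, map_mul, map_mul, hX]
      ring
    obtain ⟨ha', hb'⟩ := ih a' b' h'
    rw [pow_succ']
    exact ⟨mul_dvd_mul_left X ha', mul_dvd_mul_left X hb'⟩

theorem injective_of_map_X_eq_X_pow_two_mul : Function.Injective φ :=
  (injective_iff_map_eq_zero φ).mpr fun a ha =>
    (eq_zero_of_map_add_map_mul_X_eq_zero hC hX hu (b := 0) (by simp [ha])).1

theorem exists_eq_map_add_map_mul_X (q : R⟦X⟧) : ∃ a b : R⟦X⟧, q = φ a + φ b * X := by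
  choose c d t ht using exists_eq_C_add_C_mul_X_add_map_X_mul hX hu
  set s : ℕ → R⟦X⟧ := fun n => t^[n] q
  have hq : ∀ N, q = ∑ k ∈ range N, C (c (s k)) * φ X ^ k
      + (∑ k ∈ range N, C (d (s k)) * φ X ^ k) * X + φ X ^ N * s N := by
    intro N
    induction N with
    | zero => simp [s]
    | succ N ih =>
      have hs : s (N + 1) = t (s N) := Function.iterate_succ_apply' t N q
      rw [sum_range_succ, sum_range_succ, hs]
      linear_combination ih + φ X ^ N * ht (s N)
  refine ⟨mk fun k => c (s k), mk fun k => d (s k), ?_⟩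
  refine (sub_eq_zero.mp (eq_zero_of_forall_X_pow_dvd fun N => ?_)).symm
  obtain ⟨ra, hra⟩ := map_sub_sum_range_dvd hC (mk fun k => c (s k)) N
  obtain ⟨rb, hrb⟩ := map_sub_sum_range_dvd hC (mk fun k => d (s k)) N
  simp only [coeff_mk] at hra hrb
  have hX_dvd : (X : R⟦X⟧) ∣ φ X := ⟨X * u, by rw [hX]; ring⟩
  rw [show φ (mk fun k => c (s k)) + φ (mk fun k => d (s k)) * X - q
      = φ X ^ N * (ra + rb * X - s N) by linear_combination hra + X * hrb - hq N]
  exact (pow_dvd_pow_of_dvd hX_dvd N).mul_right _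

theorem comap_span_singleton_map (f : R⟦X⟧) :
    Ideal.comap φ (Ideal.span {φ f}) = Ideal.span {f} := by
  refine le_antisymm (fun h hh => ?_) (Ideal.span_le.mpr ?_)
  · obtain ⟨q, hq⟩ := Ideal.mem_span_singleton.mp (Ideal.mem_comap.mp hh)
    obtain ⟨a, b, rfl⟩ := exists_eq_map_add_map_mul_X hC hX hu q
    have h_split : φ (h - f * a) + φ (-(f * b)) * X = 0 := by
      simp only [map_sub, map_neg, map_mul, hq]
      ring
    obtain ⟨hfa, -⟩ := eq_zero_of_map_add_map_mul_X_eq_zero hC hX hu h_split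
    exact Ideal.mem_span_singleton.mpr ⟨a, sub_eq_zero.mp hfa⟩
  · simp

end PowerSeries

/-- Let `φ : ℤ_p⟦X⟧ → ℤ_p⟦T⟧` be the continuous `ℤ_p`-algebra homomorphism determined by
substituting `X ↦ T²(1+T)⁻¹`.  Then `φ` is injective, and for every nonzero
`f ∈ ℤ_p⟦X⟧` one has `φ⁻¹(φ(f)·ℤ_p⟦T⟧) = f·ℤ_p⟦X⟧`. -/
theorem stmt_6 (p : ℕ) [Fact p.Prime]
    (φ : PowerSeries ℤ_[p] →+* PowerSeries ℤ_[p])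
    (hφC : ∀ a : ℤ_[p], φ (PowerSeries.C (R := ℤ_[p]) a) = PowerSeries.C (R := ℤ_[p]) a)
    (hφ : ∀ (f : PowerSeries ℤ_[p]) (n : ℕ),
      φ f - Polynomial.eval₂ (PowerSeries.C (R := ℤ_[p]))
          (PowerSeries.X ^ 2 * Ring.inverse (1 + PowerSeries.X)) (PowerSeries.trunc n f)
        ∈ Ideal.span {(PowerSeries.X : PowerSeries ℤ_[p]) ^ n}) :
    Function.Injective φ
      ∧ ∀ f : PowerSeries ℤ_[p], f ≠ 0 →
          Ideal.comap φ (Ideal.span {φ f}) = Ideal.span {f} := by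
  have hX : φ X = X ^ 2 * Ring.inverse (1 + X) := by
    refine sub_eq_zero.mp (eq_zero_of_forall_X_pow_dvd fun n => ?_)
    have h := hφ X (n + 2)
    rw [trunc_X, Polynomial.eval₂_X, Ideal.mem_span_singleton] at h
    exact (pow_dvd_pow X (by omega)).trans h
  have hu : IsUnit (Ring.inverse (1 + X : ℤ_[p]⟦X⟧)) :=
    IsUnit.ringInverse (isUnit_iff_constantCoeff.mpr (by simp))
  exact ⟨injective_of_map_X_eq_X_pow_two_mul hφC hX hu,
    fun f _ => comap_span_singleton_map hφC hX hu f⟩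
end
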